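/- For every n ≥ 3: (i) for every PFA with n states and every subset S of size 3 of the state set, if some word carefully synchronizes S then the shortest such word has length at most C(n,3) + C(n,2); and (ii) there exists a PFA with n states and a subset S of size 3 whose shortest carefully synchronizing word has length exactly C(n,3) + C(n,2). Hence the maximum careful synchronization length for state subsets of size 3 in PFAs with n states is C(n,3) + C(n,2), where C denotes the binomial coefficient. -/

import Mathlib

/-- Action of a PFA (partial) transition function on a subset of states along a word:
one step maps `S` to `{δ q a : q ∈ S}` if `δ q a` is defined for all `q ∈ S`,
and to `∅` otherwise. -/
def pfaRun {n m : ℕ} (δ : Fin n → Fin m → Option (Fin n)) :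
    Finset (Fin n) → List (Fin m) → Finset (Fin n)
  | S, [] => S
  | S, a :: w =>
      pfaRun δ
        (if ∀ q ∈ S, (δ q a).isSome then S.image (fun q => (δ q a).getD q) else ∅) w

/-- A word `w` carefully synchronizes the subset `S` in the PFA `δ`. -/
def pfaSync {n m : ℕ} (δ : Fin n → Fin m → Option (Fin n)) (S : Finset (Fin n))
    (w : List (Fin m)) : Prop :=
  (pfaRun δ S w).card = 1

/-- `l` is the length of a shortest word carefully synchronizing `S` in the PFA `δ`. -/
def pfaShortestSync {n m : ℕ} (δ : Fin n → Fin m → Option (Fin n)) (S : Finset (Fin n))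
    (l : ℕ) : Prop :=
  (∃ w, pfaSync δ S w ∧ w.length = l) ∧ ∀ w, pfaSync δ S w → l ≤ w.length


/-!
Upper bound: along a shortest carefully synchronizing word, the images of `S` before the last
letter are pairwise distinct (a repetition could be cut out) and have two or three elements (a
singleton would be reached earlier, and `∅` is absorbing), so there are at most
`n.choose 3 + n.choose 2` of them.

Lower bound: take one letter for every subset `T` of states, defined exactly on `T`, which on a
pair or triple advances an odometer listing all triples and then all pairs. A letter applies to
`S` only if `S ⊆ T`, and a triple letter moves each of its pairs at most one step forward, so
no letter decreases the number of odometer steps left by more than one; from the first triple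
the odometer needs `n.choose 3 + n.choose 2` steps.
-/

open Finset

section PFA

variable {n m : ℕ} (δ : Fin n → Fin m → Option (Fin n))

def pfaStep (S : Finset (Fin n)) (a : Fin m) : Finset (Fin n) :=
  if ∀ q ∈ S, (δ q a).isSome then S.image fun q => (δ q a).getD q else ∅

lemma pfaRun_cons (S : Finset (Fin n)) (a : Fin m) (w : List (Fin m)) :
    pfaRun δ S (a :: w) = pfaRun δ (pfaStep δ S a) w :=
  rfl

lemma pfaRun_append (S : Finset (Fin n)) (u v : List (Fin m)) :
    pfaRun δ S (u ++ v) = pfaRun δ (pfaRun δ S u) v := by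
  induction u generalizing S with
  | nil => rfl
  | cons a u ih => exact ih _

lemma pfaRun_empty (w : List (Fin m)) : pfaRun δ ∅ w = ∅ := by
  induction w with
  | nil => rfl
  | cons a w ih => simpa [pfaRun_cons, pfaStep] using ih

lemma card_pfaRun_le (S : Finset (Fin n)) (w : List (Fin m)) : #(pfaRun δ S w) ≤ #S := by
  induction w generalizing S with
  | nil => rfl
  | cons a w ih =>
    refine (ih _).trans ?_
    split_ifs
    exacts [card_image_le, by simp]

variable {δ}

lemma Finset.Nonempty.of_pfaSync {S : Finset (Fin n)} {w : List (Fin m)}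
    (h : pfaSync δ S w) : S.Nonempty := by
  rw [nonempty_iff_ne_empty]
  rintro rfl
  simp [pfaSync, pfaRun_empty] at h

theorem length_le_of_shortest_pfaSync {S : Finset (Fin n)} {w : List (Fin m)}
    (hw : pfaSync δ S w) (hmin : ∀ w', pfaSync δ S w' → w.length ≤ w'.length) :
    w.length ≤ #{T : Finset (Fin n) | 2 ≤ #T ∧ #T ≤ #S} := by
  set V : ℕ → Finset (Fin n) := fun t => pfaRun δ S (w.take t)
  have hV : ∀ t, pfaRun δ (V t) (w.drop t) = pfaRun δ S w := fun t => by
    rw [← pfaRun_append, List.take_append_drop]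
  have two_le : ∀ t < w.length, 2 ≤ #(V t) := by
    intro t ht
    by_contra! hlt
    have hne : (V t).Nonempty := .of_pfaSync (w := w.drop t) (by rw [pfaSync, hV]; exact hw)
    have hsync : pfaSync δ S (w.take t) := by
      have := hne.card_pos
      change #(V t) = 1
      omega
    have := hmin _ hsync
    rw [List.length_take] at this
    omega
  have hcut : ∀ s t, s < t → t < w.length → V s ≠ V t := by
    intro s t hst ht heq
    have hsync : pfaSync δ S (w.take s ++ w.drop t) := by
      rw [pfaSync, pfaRun_append]
      change #(pfaRun δ (V s) _) = 1
      rw [heq, hV]; exact hw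
    have := hmin _ hsync
    rw [List.length_append, List.length_take, List.length_drop] at this; omega
  have hinj : Set.InjOn V (range w.length) := by
    intro s hs t ht heq
    simp only [coe_range, Set.mem_Iio] at hs ht
    by_contra hne
    rcases Nat.lt_or_gt_of_ne hne with h | h
    exacts [hcut s t h ht heq, hcut t s h hs heq.symm]
  have hmaps : ∀ t ∈ range w.length,
      V t ∈ ({T | 2 ≤ #T ∧ #T ≤ #S} : Finset (Finset (Fin n))) :=
    fun t ht => by
      rw [mem_range] at ht
      simpa using ⟨two_le t ht, card_pfaRun_le δ S _⟩
  simpa using card_le_card_of_injOn V hmaps hinj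

theorem exists_pfaSync_length_le {S : Finset (Fin n)} (h : ∃ w, pfaSync δ S w) :
    ∃ w, pfaSync δ S w ∧ w.length ≤ #{T : Finset (Fin n) | 2 ≤ #T ∧ #T ≤ #S} := by
  classical
  have hex : ∃ l, ∃ w, pfaSync δ S w ∧ w.length = l := by
    obtain ⟨w, hw⟩ := h; exact ⟨_, w, hw, rfl⟩
  obtain ⟨w, hw, hlen⟩ := Nat.find_spec hex
  refine ⟨w, hw, length_le_of_shortest_pfaSync hw fun w' hw' => ?_⟩
  rw [hlen]
  exact Nat.find_min' hex ⟨w', hw', rfl⟩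

lemma card_filter_two_le_card_le_three :
    #{T : Finset (Fin n) | 2 ≤ #T ∧ #T ≤ 3} = n.choose 3 + n.choose 2 := by
  have : ({T : Finset (Fin n) | 2 ≤ #T ∧ #T ≤ 3} : Finset _) =
      powersetCard 3 univ ∪ powersetCard 2 univ := by
    ext T; simp only [mem_filter, mem_univ, true_and, mem_union, mem_powersetCard,
      subset_univ]; omega
  rw [this, card_union_of_disjoint, card_powersetCard, card_powersetCard, card_univ,
    Fintype.card_fin]
  exact disjoint_left.2 fun T h3 h2 => by
    rw [mem_powersetCard] at h3 h2; omega

theorem le_length_of_pfaSync (φ : Finset (Fin n) → ℕ) (hφ : ∀ S, #S = 1 → φ S = 0)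
    (hstep : ∀ S a, 2 ≤ #S → (pfaStep δ S a).Nonempty → φ S ≤ φ (pfaStep δ S a) + 1)
    {S : Finset (Fin n)} {w : List (Fin m)} (hw : pfaSync δ S w) : φ S ≤ w.length := by
  induction w generalizing S with
  | nil => simp [hφ S hw]
  | cons a w ih =>
    rw [pfaSync, pfaRun_cons] at hw
    have hne : (pfaStep δ S a).Nonempty := .of_pfaSync hw
    rcases le_or_gt 2 #S with hS | hS
    · have := hstep S a hS hne
      have := ih hw
      rw [List.length_cons]; omega
    · have hS1 : #S = 1 := by
        have : S.Nonempty := by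
          rw [nonempty_iff_ne_empty]
          rintro rfl
          simp [pfaStep] at hne
        have := this.card_pos; omega
      simp [hφ S hS1]

theorem exists_pfaSync_length_eq (P : Finset (Fin n) → Prop) (φ : Finset (Fin n) → ℕ)
    (hφ : ∀ S, P S → φ S = 0 → #S = 1)
    (hstep : ∀ S, P S → 0 < φ S →
      ∃ a, P (pfaStep δ S a) ∧ φ (pfaStep δ S a) + 1 = φ S)
    {S : Finset (Fin n)} (hS : P S) : ∃ w, pfaSync δ S w ∧ w.length = φ S := by
  obtain ⟨k, hk⟩ : ∃ k, φ S = k := ⟨_, rfl⟩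
  induction k generalizing S with
  | zero => exact ⟨[], hφ S hS hk, hk.symm⟩
  | succ k ih =>
    obtain ⟨a, ha, hφa⟩ := hstep S hS (by omega)
    obtain ⟨w, hw, hlen⟩ := ih ha (by omega)
    exact ⟨a :: w, hw, by rw [List.length_cons]; omega⟩

end PFA

section SortLemmas

variable {α : Type*} [LinearOrder α] {x y z : α} {t : Finset α}

lemma Finset.sort_pair (h : x < y) : ({x, y} : Finset α).sort = [x, y] := by
  rw [sort_insert _ (fun b hb => by rw [mem_singleton.1 hb]; exact h.le) (by simpa using h.ne),
    sort_singleton]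

lemma Finset.sort_triple (hxy : x < y) (hyz : y < z) :
    ({x, y, z} : Finset α).sort = [x, y, z] := by
  rw [sort_insert _ _ (by simp [hxy.ne, (hxy.trans hyz).ne]), sort_pair hyz]
  simp only [mem_insert, mem_singleton]
  rintro b (rfl | rfl)
  exacts [hxy.le, (hxy.trans hyz).le]

lemma Finset.eq_pair_of_sort_eq (h : t.sort = [x, y]) : t = {x, y} ∧ x < y := by
  have hp := pairwise_sort t (· ≤ ·)
  have hd := sort_nodup t (· ≤ ·)
  rw [h] at hp hd
  simp only [List.pairwise_cons, List.mem_cons, List.not_mem_nil, or_false, forall_eq,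
    List.nodup_cons] at hp hd
  refine ⟨by rw [← sort_toFinset t (· ≤ ·), h]; simp, lt_of_le_of_ne hp.1 hd.1⟩

lemma Finset.eq_triple_of_sort_eq (h : t.sort = [x, y, z]) :
    t = {x, y, z} ∧ x < y ∧ y < z := by
  have hp := pairwise_sort t (· ≤ ·)
  have hd := sort_nodup t (· ≤ ·)
  rw [h] at hp hd
  simp only [List.pairwise_cons, List.mem_cons, List.not_mem_nil, or_false, forall_eq_or_imp,
    forall_eq, IsEmpty.forall_iff, implies_true, List.Pairwise.nil, and_self, and_true,
    List.nodup_cons, not_or, not_false_eq_true, List.nodup_nil] at hp hd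
  refine ⟨by rw [← sort_toFinset t (· ≤ ·), h]; simp, lt_of_le_of_ne hp.1.1 hd.1.1,
    lt_of_le_of_ne hp.2 hd.2⟩

lemma Finset.exists_eq_pair_of_card_eq_two (h : #t = 2) : ∃ x y, x < y ∧ t = {x, y} := by
  obtain ⟨x, y, hl⟩ := List.length_eq_two.1 (by rw [length_sort, h] : (t.sort).length = 2)
  obtain ⟨rfl, hxy⟩ := eq_pair_of_sort_eq hl
  exact ⟨x, y, hxy, rfl⟩

lemma Finset.exists_eq_triple_of_card_eq_three (h : #t = 3) :
    ∃ x y z, x < y ∧ y < z ∧ t = {x, y, z} := by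
  obtain ⟨x, y, z, hl⟩ := List.length_eq_three.1 (by rw [length_sort, h] : (t.sort).length = 3)
  obtain ⟨rfl, hxy, hyz⟩ := eq_triple_of_sort_eq hl
  exact ⟨x, y, z, hxy, hyz, rfl⟩

end SortLemmas

lemma Nat.succ_choose_two (m : ℕ) : (m + 1).choose 2 = m + m.choose 2 := by
  rw [Nat.choose_succ_succ, Nat.choose_one_right]

namespace Odometer

/-- The triples `x < y < z < n` are listed with `x` running from `n - 3` down to `0` and, for
each `x`, the pairs `(y, z)` in lexicographic order; a letter moves its triple to the next one,
and the last triple `(0, n - 2, n - 1)` onto the pair `{0, 1}`. -/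
def tripleNext (n x y z q : ℕ) : ℕ :=
  if z + 1 < n then (if q = z then z + 1 else q)
  else if y + 2 < n then (if q = y then y + 1 else if q = z then y + 2 else q)
  else if 0 < x then (if q = x then x - 1 else if q = y then x else x + 1)
  else if q = x then 0 else 1

/-- The pairs are listed lexicographically; the last one collapses onto `{0}`. -/
def pairNext (n x y q : ℕ) : ℕ :=
  if y + 1 < n then (if q = y then y + 1 else q)
  else if x + 2 < n then (if q = x then x + 1 else x + 2)
  else 0

/-- The number of pairs `i' < j' < n` lexicographically at least `(i, j)`. -/
def pairRank (n i j : ℕ) : ℕ := (n - j) + (n - 1 - i).choose 2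

/-- The number of triples from `(i, j, k)` on in the order of `tripleNext`, plus the
`n.choose 2` pairs visited afterwards. -/
def tripleRank (n i j k : ℕ) : ℕ :=
  n.choose 2 + (n - k) + (n - 1 - j).choose 2 + (n.choose 3 - (n - i).choose 3)

lemma pairRank_succ_right {n i j : ℕ} (h : j + 1 < n) :
    pairRank n i (j + 1) + 1 = pairRank n i j := by
  unfold pairRank; omega

lemma pairRank_carry {n i : ℕ} (h : i + 2 < n) :
    pairRank n (i + 1) (i + 2) + 1 = pairRank n i (n - 1) := by
  have : (n - 1 - i).choose 2 = (n - 1 - (i + 1)) + (n - 1 - (i + 1)).choose 2 := by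
    rw [← Nat.succ_choose_two]; congr 1; omega
  unfold pairRank; omega

lemma pairRank_last {n : ℕ} (h : 2 ≤ n) : pairRank n (n - 2) (n - 1) = 1 := by
  rw [pairRank, show n - 1 - (n - 2) = 1 by omega, Nat.choose_succ_self]; omega

lemma pairRank_le_pairRank_add_one {n p q p' q' : ℕ} (hpq : p < q) (hq : q < n) (hq' : q' < n)
    (h : p' < p ∨ (p' = p ∧ q' ≤ q + 1) ∨ (p' = p + 1 ∧ q' = p + 2 ∧ q + 1 = n)) :
    pairRank n p q ≤ pairRank n p' q' + 1 := by
  rcases h with h | ⟨rfl, h⟩ | ⟨rfl, rfl, h⟩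
  · have h1 : (n - p).choose 2 = (n - 1 - p) + (n - 1 - p).choose 2 := by
      rw [← Nat.succ_choose_two]; congr 1; omega
    have h2 : (n - p).choose 2 ≤ (n - 1 - p').choose 2 := Nat.choose_le_choose 2 (by omega)
    unfold pairRank; omega
  · unfold pairRank; omega
  · rw [pairRank_carry hq', show q = n - 1 by omega]

lemma tripleRank_succ_right {n i j k : ℕ} (h : k + 1 < n) :
    tripleRank n i j (k + 1) + 1 = tripleRank n i j k := by
  unfold tripleRank; omega

lemma tripleRank_carry {n i j : ℕ} (h : j + 2 < n) :
    tripleRank n i (j + 1) (j + 2) + 1 = tripleRank n i j (n - 1) := by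
  have : (n - 1 - j).choose 2 = (n - 1 - (j + 1)) + (n - 1 - (j + 1)).choose 2 := by
    rw [← Nat.succ_choose_two]; congr 1; omega
  unfold tripleRank; omega

lemma tripleRank_wrap {n i : ℕ} (h : i + 3 < n) :
    tripleRank n i (i + 1) (i + 2) + 1 = tripleRank n (i + 1) (n - 2) (n - 1) := by
  have h3 : (n - i).choose 3 = (n - (i + 1)).choose 2 + (n - (i + 1)).choose 3 := by
    rw [← Nat.choose_succ_succ]; congr 1; omega
  have h2 : (n - (i + 1)).choose 2 = (n - 1 - (i + 1)) + (n - 1 - (i + 1)).choose 2 := by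
    rw [← Nat.succ_choose_two]; congr 1; omega
  have hle : (n - i).choose 3 ≤ n.choose 3 := Nat.choose_le_choose 3 (by omega)
  rw [tripleRank, tripleRank, show n - 1 - (n - 2) = 1 by omega]
  simp only [Nat.choose_succ_self]
  omega

lemma pairRank_zero_one_add_one {n : ℕ} (h : 3 ≤ n) :
    pairRank n 0 1 + 1 = tripleRank n 0 (n - 2) (n - 1) := by
  have : n.choose 2 = (n - 1) + (n - 1).choose 2 := by
    rw [← Nat.succ_choose_two]; congr 1; omega
  rw [pairRank, tripleRank, show n - 1 - (n - 2) = 1 by omega]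
  simp only [Nat.choose_succ_self, Nat.sub_zero, Nat.sub_self]
  omega

lemma tripleRank_start {n : ℕ} (h : 3 ≤ n) :
    tripleRank n (n - 3) (n - 2) (n - 1) = n.choose 3 + n.choose 2 := by
  have : 1 ≤ n.choose 3 := Nat.choose_pos h
  rw [tripleRank, show n - 1 - (n - 2) = 1 by omega, show n - (n - 3) = 3 by omega]
  simp only [Nat.choose_succ_self, Nat.choose_self]
  omega


/-- The number of odometer steps from a pair or triple `s` to a single state. -/
def rank (n : ℕ) (s : Finset ℕ) : ℕ :=
  match s.sort with
  | [x, y, z] => tripleRank n x y z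
  | [x, y] => pairRank n x y
  | _ => 0

def letterMap (n : ℕ) (t : Finset ℕ) : ℕ → ℕ :=
  match t.sort with
  | [x, y, z] => tripleNext n x y z
  | [x, y] => pairNext n x y
  | _ => id

lemma rank_singleton (n x : ℕ) : rank n {x} = 0 := by
  simp [rank]

lemma rank_pair (n : ℕ) {x y : ℕ} (h : x < y) : rank n {x, y} = pairRank n x y := by
  simp [rank, sort_pair h]

lemma rank_triple (n : ℕ) {x y z : ℕ} (hxy : x < y) (hyz : y < z) :
    rank n {x, y, z} = tripleRank n x y z := by
  simp [rank, sort_triple hxy hyz]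

lemma rank_image_tripleNext {n x y z : ℕ} (hxy : x < y) (hyz : y < z) (hz : z < n) :
    rank n (({x, y, z} : Finset ℕ).image (tripleNext n x y z)) + 1 = tripleRank n x y z := by
  have hxz : x ≠ z := (hxy.trans hyz).ne
  simp only [image_insert, image_singleton]
  by_cases hz1 : z + 1 < n
  · have e : ∀ q, tripleNext n x y z q = if q = z then z + 1 else q := fun q => if_pos hz1
    simp only [e, if_neg hxz, if_neg hyz.ne, if_true]
    rw [rank_triple n hxy (by omega), tripleRank_succ_right hz1]
  by_cases hy2 : y + 2 < n
  · have e : ∀ q, tripleNext n x y z q =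
        if q = y then y + 1 else if q = z then y + 2 else q := fun q => by
      rw [tripleNext, if_neg hz1, if_pos hy2]
    simp only [e, if_neg hxy.ne, if_neg hxz, if_neg hyz.ne', if_true]
    rw [rank_triple n (by omega) (by omega), tripleRank_carry hy2, show z = n - 1 by omega]
  obtain rfl : z = n - 1 := by omega
  obtain rfl : y = n - 2 := by omega
  by_cases hx : 0 < x
  · have e : ∀ q, tripleNext n x (n - 2) (n - 1) q =
        if q = x then x - 1 else if q = n - 2 then x else x + 1 := fun q => by
      rw [tripleNext, if_neg hz1, if_neg hy2, if_pos hx]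
    simp only [e, if_neg hxy.ne', if_neg hxz.symm, if_neg hyz.ne', if_true]
    obtain ⟨i, rfl⟩ : ∃ i, x = i + 1 := ⟨x - 1, by omega⟩
    rw [Nat.add_sub_cancel, rank_triple n (by omega) (by omega), ← tripleRank_wrap (by omega)]
  · have e : ∀ q, tripleNext n x (n - 2) (n - 1) q = if q = x then 0 else 1 := fun q => by
      rw [tripleNext, if_neg hz1, if_neg hy2, if_neg hx]
    simp only [e, if_neg hxy.ne', if_neg hxz.symm, if_true, insert_eq_of_mem (mem_singleton_self 1)]
    rw [rank_pair n one_pos, show x = 0 by omega, pairRank_zero_one_add_one (by omega)]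

lemma rank_image_pairNext {n x y : ℕ} (hxy : x < y) (hy : y < n) :
    rank n (({x, y} : Finset ℕ).image (pairNext n x y)) + 1 = pairRank n x y := by
  simp only [image_insert, image_singleton]
  by_cases hy1 : y + 1 < n
  · have e : ∀ q, pairNext n x y q = if q = y then y + 1 else q := fun q => if_pos hy1
    simp only [e, if_neg hxy.ne, if_true]
    rw [rank_pair n (by omega), pairRank_succ_right hy1]
  by_cases hx2 : x + 2 < n
  · have e : ∀ q, pairNext n x y q = if q = x then x + 1 else x + 2 := fun q => by
      rw [pairNext, if_neg hy1, if_pos hx2]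
    simp only [e, if_neg hxy.ne', if_true]
    rw [rank_pair n (by omega), pairRank_carry hx2, show y = n - 1 by omega]
  · have e : ∀ q, pairNext n x y q = 0 := fun q => by rw [pairNext, if_neg hy1, if_neg hx2]
    simp only [e, insert_eq_of_mem (mem_singleton_self 0)]
    rw [rank_singleton, show x = n - 2 by omega, show y = n - 1 by omega, pairRank_last (by omega)]

lemma pairRank_le_rank_image_tripleNext {n x y z p q : ℕ} (hxy : x < y) (hyz : y < z)
    (hz : z < n) (hp : p ∈ ({x, y, z} : Finset ℕ)) (hq : q ∈ ({x, y, z} : Finset ℕ))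
    (hpq : p < q) :
    pairRank n p q ≤ rank n (({p, q} : Finset ℕ).image (tripleNext n x y z)) + 1 := by
  simp only [mem_insert, mem_singleton] at hp hq
  rw [image_insert, image_singleton]
  have hmono : tripleNext n x y z p ≤ tripleNext n x y z q := by
    unfold tripleNext; split_ifs <;> omega
  rcases hmono.lt_or_eq with hlt | heq
  · rw [rank_pair n hlt]
    apply pairRank_le_pairRank_add_one hpq (by omega) (by unfold tripleNext; split_ifs <;> omega)
    unfold tripleNext; split_ifs <;> omega
  · obtain ⟨rfl, rfl⟩ : p = n - 2 ∧ q = n - 1 := by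
      unfold tripleNext at heq; split_ifs at heq <;> omega
    rw [heq, insert_eq_of_mem (mem_singleton_self _), rank_singleton, pairRank_last (by omega)]

lemma letterMap_pair (n : ℕ) {x y : ℕ} (h : x < y) : letterMap n {x, y} = pairNext n x y := by
  simp [letterMap, sort_pair h]

lemma letterMap_triple (n : ℕ) {x y z : ℕ} (hxy : x < y) (hyz : y < z) :
    letterMap n {x, y, z} = tripleNext n x y z := by
  simp [letterMap, sort_triple hxy hyz]

lemma letterMap_of_three_lt_card (n : ℕ) {t : Finset ℕ} (h : 3 < #t) : letterMap n t = id := by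
  have hlen := length_sort (s := t) (· ≤ ·)
  unfold letterMap
  split
  next hs => simp only [hs, List.length_cons, List.length_nil] at hlen; omega
  next hs => simp only [hs, List.length_cons, List.length_nil] at hlen; omega
  next => rfl

section LetterMap

variable {n : ℕ} {s t : Finset ℕ}

lemma letterMap_lt (ht : ∀ q ∈ t, q < n) {q : ℕ} (hq : q ∈ t) : letterMap n t q < n := by
  rcases lt_or_ge 3 #t with h | h
  · rw [letterMap_of_three_lt_card n h]; exact ht q hq
  have hpos := card_pos.2 ⟨q, hq⟩
  interval_cases hcard : #t
  · obtain ⟨x, rfl⟩ := card_eq_one.1 hcard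
    simpa [letterMap] using ht q hq
  · obtain ⟨x, y, hxy, rfl⟩ := exists_eq_pair_of_card_eq_two hcard
    have hy := ht y (by simp)
    simp only [mem_insert, mem_singleton] at hq
    rw [letterMap_pair n hxy]; unfold pairNext; split_ifs <;> omega
  · obtain ⟨x, y, z, hxy, hyz, rfl⟩ := exists_eq_triple_of_card_eq_three hcard
    have hz := ht z (by simp)
    simp only [mem_insert, mem_singleton] at hq
    rw [letterMap_triple n hxy hyz]; unfold tripleNext; split_ifs <;> omega

lemma rank_image_letterMap_self (h2 : 2 ≤ #t) (h3 : #t ≤ 3) (ht : ∀ q ∈ t, q < n) :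
    rank n (t.image (letterMap n t)) + 1 = rank n t := by
  obtain h | h : #t = 2 ∨ #t = 3 := by omega
  · obtain ⟨x, y, hxy, rfl⟩ := exists_eq_pair_of_card_eq_two h
    rw [letterMap_pair n hxy, rank_image_pairNext hxy (ht y (by simp)), rank_pair n hxy]
  · obtain ⟨x, y, z, hxy, hyz, rfl⟩ := exists_eq_triple_of_card_eq_three h
    rw [letterMap_triple n hxy hyz, rank_image_tripleNext hxy hyz (ht z (by simp)),
      rank_triple n hxy hyz]

lemma rank_le_rank_image_letterMap (hst : s ⊆ t) (hs : 2 ≤ #s) (ht : ∀ q ∈ t, q < n) :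
    rank n s ≤ rank n (s.image (letterMap n t)) + 1 := by
  have hcard := card_le_card hst
  rcases lt_or_ge 3 #t with h3 | h3
  · rw [letterMap_of_three_lt_card n h3, image_id]; omega
  obtain rfl | hlt := eq_or_ne s t
  · exact (rank_image_letterMap_self hs h3 ht).ge
  have hlt : #s < #t := card_lt_card (ssubset_of_subset_of_ne hst hlt)
  obtain ⟨x, y, z, hxy, hyz, rfl⟩ := exists_eq_triple_of_card_eq_three (show #t = 3 by omega)
  obtain ⟨p, q, hpq, rfl⟩ := exists_eq_pair_of_card_eq_two (show #s = 2 by omega)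
  rw [letterMap_triple n hxy hyz, rank_pair n hpq]
  exact pairRank_le_rank_image_tripleNext hxy hyz (ht z (by simp)) (hst (by simp))
    (hst (by simp)) hpq

end LetterMap

section Automaton

variable {n : ℕ}

/-- The reduction mod `n` only serves to land in `Fin n`: it never takes effect on `T`, by
`letterMap_lt`. -/
def move (T : Finset (Fin n)) (q : Fin n) : Fin n :=
  ⟨letterMap n (T.map Fin.valEmbedding) q % n, Nat.mod_lt _ q.pos⟩

variable (n) in
/-- One letter for each subset `T` of states, defined exactly on `T`. -/
noncomputable def pfa : Fin n → Fin (Fintype.card (Finset (Fin n))) → Option (Fin n) :=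
  fun q a =>
    let T := (Fintype.equivFin (Finset (Fin n))).symm a
    if q ∈ T then some (move T q) else none

lemma pfaStep_pfa (S T : Finset (Fin n)) :
    pfaStep (pfa n) S (Fintype.equivFin _ T) = if S ⊆ T then
      S.image (move T) else ∅ := by
  simp only [pfaStep, pfa, Equiv.symm_apply_apply]
  by_cases h : S ⊆ T
  · rw [if_pos fun q hq => by simp [h hq], if_pos h]
    refine image_congr fun q hq => by simp [h hq]
  · obtain ⟨q, hq, hqT⟩ := not_subset.1 h
    rw [if_neg fun hall => by simpa [hqT] using hall q hq, if_neg h]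

lemma map_image_move {S T : Finset (Fin n)} (h : S ⊆ T) :
    (S.image (move T)).map Fin.valEmbedding =
      (S.map Fin.valEmbedding).image (letterMap n (T.map Fin.valEmbedding)) := by
  rw [map_eq_image _ (S.image _), map_eq_image _ S, image_image, image_image]
  refine image_congr fun q hq => ?_
  simp only [Function.comp_apply, Fin.valEmbedding_apply, move]
  refine Nat.mod_eq_of_lt (letterMap_lt (fun r hr => ?_) ?_)
  · obtain ⟨r, -, rfl⟩ := mem_map.1 hr; exact r.isLt
  · exact mem_map_of_mem _ (h hq)

theorem pfaShortestSync_pfa {S : Finset (Fin n)} (hS : S.Nonempty) (h3 : #S ≤ 3) :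
    pfaShortestSync (pfa n) S (rank n (S.map Fin.valEmbedding)) := by
  have hvals : ∀ T : Finset (Fin n), ∀ q ∈ T.map Fin.valEmbedding, q < n := fun T q hq => by
    obtain ⟨r, -, rfl⟩ := mem_map.1 hq
    exact r.isLt
  have hsingle : ∀ S : Finset (Fin n), #S = 1 → rank n (S.map Fin.valEmbedding) = 0 :=
    fun S h => by
      obtain ⟨q, rfl⟩ := card_eq_one.1 h
      rw [map_singleton, rank_singleton]
  refine ⟨exists_pfaSync_length_eq (δ := pfa n) (fun S => S.Nonempty ∧ #S ≤ 3)
    (fun S => rank n (S.map Fin.valEmbedding)) ?_ ?_ ⟨hS, h3⟩,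
    fun w hw => le_length_of_pfaSync _ hsingle ?_ hw⟩
  · rintro S ⟨hne, h3⟩ h0
    by_contra h1
    have := rank_image_letterMap_self (t := S.map Fin.valEmbedding)
      (by rw [card_map]; have := hne.card_pos; omega) (by rwa [card_map]) (hvals S)
    omega
  · rintro S ⟨hne, h3⟩ hpos
    have h2 : 2 ≤ #S := by
      by_contra h
      have := hsingle S (by have := hne.card_pos; omega)
      omega
    refine ⟨Fintype.equivFin _ S, ?_, ?_⟩
    · rw [pfaStep_pfa, if_pos subset_rfl]
      exact ⟨hne.image _, card_image_le.trans h3⟩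
    · rw [pfaStep_pfa, if_pos subset_rfl, map_image_move subset_rfl]
      exact rank_image_letterMap_self (by rwa [card_map]) (by rwa [card_map]) (hvals S)
  · intro S a h2 hne
    obtain ⟨T, rfl⟩ := (Fintype.equivFin _).surjective a
    rw [pfaStep_pfa] at hne ⊢
    have hST : S ⊆ T := by
      by_contra h
      rw [if_neg h] at hne
      exact not_nonempty_empty hne
    rw [if_pos hST, map_image_move hST]
    exact rank_le_rank_image_letterMap (map_subset_map.2 hST) (by rwa [card_map]) (hvals T)

end Automaton

end Odometer

theorem stmt6 (n : ℕ) (hn : 3 ≤ n) :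
    -- (i) upper bound for every PFA and every subset of size 3
    (∀ (m : ℕ) (δ : Fin n → Fin m → Option (Fin n)) (S : Finset (Fin n)),
      S.card = 3 → (∃ w, pfaSync δ S w) →
        ∃ w, pfaSync δ S w ∧ w.length ≤ n.choose 3 + n.choose 2) ∧
    -- (ii) the bound is attained
    (∃ (m : ℕ) (δ : Fin n → Fin m → Option (Fin n)) (S : Finset (Fin n)),
      S.card = 3 ∧ pfaShortestSync δ S (n.choose 3 + n.choose 2)) ∧
    -- hence: the maximum careful synchronization length for 3-subsets is the bound
    IsGreatest {l : ℕ | ∃ (m : ℕ) (δ : Fin n → Fin m → Option (Fin n))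
        (S : Finset (Fin n)), S.card = 3 ∧ pfaShortestSync δ S l}
      (n.choose 3 + n.choose 2) := by
  have upper : ∀ (m : ℕ) (δ : Fin n → Fin m → Option (Fin n)) (S : Finset (Fin n)),
      #S = 3 → (∃ w, pfaSync δ S w) →
        ∃ w, pfaSync δ S w ∧ w.length ≤ n.choose 3 + n.choose 2 := by
    intro m δ S hS h
    rw [← card_filter_two_le_card_le_three, ← hS]
    exact exists_pfaSync_length_le h
  have attained : ∃ (m : ℕ) (δ : Fin n → Fin m → Option (Fin n)) (S : Finset (Fin n)),
      #S = 3 ∧ pfaShortestSync δ S (n.choose 3 + n.choose 2) := by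
    let S : Finset (Fin n) := {⟨n - 3, by omega⟩, ⟨n - 2, by omega⟩, ⟨n - 1, by omega⟩}
    have hS : S.map Fin.valEmbedding = {n - 3, n - 2, n - 1} := by simp [S]
    have hcard : #S = 3 := by
      rw [← card_map Fin.valEmbedding, hS]
      exact card_eq_three.2 ⟨_, _, _, by omega, by omega, by omega, rfl⟩
    refine ⟨_, Odometer.pfa n, S, hcard, ?_⟩
    rw [← Odometer.tripleRank_start hn, ← Odometer.rank_triple n (by omega) (by omega), ← hS]
    exact Odometer.pfaShortestSync_pfa (card_pos.1 (by omega)) hcard.le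
  refine ⟨upper, attained, attained, ?_⟩
  rintro l ⟨m, δ, S, hS, ⟨w₀, hw₀, -⟩, hmin⟩
  obtain ⟨w, hw, hle⟩ := upper m δ S hS ⟨w₀, hw₀⟩
  exact (hmin w hw).trans hle
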